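/- Hypergraph-independence for non-nested positive formulas (forwarding setting): Let L⁺_K be the fragment of L⁺ in which knowledge operators C_G are not nested (so under any C_G the formula is a negation-free propositional formula). For any H-compliant forwarding state (V,M) and φ ∈ L⁺_K, (V,M) ⊨ φ iff (V,M) ⊨_H φ. -/

import Mathlib

structure Msg (P A : Type) where
  sender : P
  grp : Set P
  fact : A

inductive Form (P A : Type) where
  | atom : A → Form P A
  | neg  : Form P A → Form P A
  | and  : Form P A → Form P A → Form P A
  | or   : Form P A → Form P A → Form P A
  | ck   : Set P → Form P A → Form P A

/-- The negation-free (positive) fragment L⁺. -/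
def Positive {P A : Type} : Form P A → Prop
  | .atom _ => True
  | .neg _ => False
  | .and φ ψ => Positive φ ∧ Positive ψ
  | .or φ ψ => Positive φ ∧ Positive ψ
  | .ck _ φ => Positive φ

/-- Atoms occurring in a formula. -/
def FactsF {P A : Type} : Form P A → Set A
  | .atom p => {p}
  | .neg φ => FactsF φ
  | .and φ ψ => FactsF φ ∪ FactsF ψ
  | .or φ ψ => FactsF φ ∪ FactsF ψ
  | .ck _ φ => FactsF φ

/-- Facts occurring in a set of messages. -/
def Facts {P A : Type} (M : Set (Msg P A)) : Set A := {p | ∃ m ∈ M, m.fact = p}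

/-- All messages are H-compliant. -/
def HComp {P A : Type} (H : Set (Set P)) (M : Set (Msg P A)) : Prop :=
  ∀ m ∈ M, m.grp ∈ H

/-- (j,B,p) ⤳ (i,A,p): p ∉ At_i and i ∈ B. -/
def leadsto {P A : Type} (owner : A → P) (m m' : Msg P A) : Prop :=
  m'.fact = m.fact ∧ owner m'.fact ≠ m'.sender ∧ m'.sender ∈ m.grp

/-- An explanation of a message m in (V,M): a non-circular ⤳-chain of
    p-messages in M starting at a player who initially knows p = m.fact
    and ending at m. -/
def Explains {P A : Type} (owner : A → P) (V : Set A) (M : Set (Msg P A))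
    (m : Msg P A) : Prop :=
  ∃ L : List (Msg P A),
    (∀ x ∈ L, x ∈ M) ∧
    List.Chain' (leadsto owner) L ∧
    (L.map Msg.sender).Nodup ∧
    (∀ x ∈ L, x.fact = m.fact) ∧
    (∃ m₀, L.head? = some m₀ ∧ owner m₀.fact = m₀.sender ∧ m₀.fact ∈ V) ∧
    L.getLast? = some m

/-- A forwarding state: every message has a sender in its group and an explanation. -/
def FwState {P A : Type} (owner : A → P) (V : Set A) (M : Set (Msg P A)) : Prop :=
  ∀ m ∈ M, m.sender ∈ m.grp ∧ Explains owner V M m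

/-- Indistinguishability for player i: equality of (V_i, M_i). -/
def indist {P A : Type} (owner : A → P) (i : P)
    (s t : Set A × Set (Msg P A)) : Prop :=
  {p ∈ s.1 | owner p = i} = {p ∈ t.1 | owner p = i} ∧
  {m ∈ s.2 | i ∈ m.grp} = {m ∈ t.2 | i ∈ m.grp}

/-- ∼_G: transitive closure of the union of the ∼_i, i ∈ G. -/
def reach {P A : Type} (owner : A → P) (G : Set P) :
    Set A × Set (Msg P A) → Set A × Set (Msg P A) → Prop :=
  Relation.TransGen (fun s t => ∃ i ∈ G, indist owner i s t)

/-- Semantics ⊨_H (forwarding setting): C_G quantifies over H-compliant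
    forwarding states. -/
def sat {P A : Type} (owner : A → P) (H : Set (Set P)) :
    Form P A → Set A → Set (Msg P A) → Prop
  | .atom p, V, _ => p ∈ V
  | .neg φ, V, M => ¬ sat owner H φ V M
  | .and φ ψ, V, M => sat owner H φ V M ∧ sat owner H ψ V M
  | .or φ ψ, V, M => sat owner H φ V M ∨ sat owner H ψ V M
  | .ck G φ, V, M => ∀ V' M', FwState owner V' M' → HComp H M' →
      reach owner G (V, M) (V', M') → sat owner H φ V' M'

/-- The complete hypergraph: all nonempty subsets of players. -/
def completeH (P : Type) : Set (Set P) := {B | B.Nonempty}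

/-- Negation-free propositional formulas (atoms, ∧, ∨ only). -/
def PropPos {P A : Type} : Form P A → Prop
  | .atom _ => True
  | .and φ ψ => PropPos φ ∧ PropPos ψ
  | .or φ ψ => PropPos φ ∧ PropPos ψ
  | _ => False

/-- The fragment L⁺_K of L⁺: no nested knowledge operators. -/
def NonNested {P A : Type} : Form P A → Prop
  | .atom _ => True
  | .neg _ => False
  | .and φ ψ => NonNested φ ∧ NonNested ψ
  | .or φ ψ => NonNested φ ∧ NonNested ψ
  | .ck _ φ => PropPos φ

/-
A negation-free propositional ψ ignores the hypergraph and the messages and is monotone in the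
valuation, so only `⊨ C_G ψ → ⊨_H C_G ψ` needs an argument. Along `∼_G` a message survives when
its group contains `G`, and an atom survives when `G` is the singleton of its owner; through the
explanation chains, the *forced* atoms `W` carried by such messages or atoms are true in every
forwarding state `∼_G`-reachable from `(V, M)`. Conversely the players of the finite group `G`
can, one after another, forget everything else, so the restriction of `(V, M)` to the atoms in `W`
and the messages about them is `∼_G`-reachable; it is still an `H`-compliant forwarding state.
Hence `⊨_H C_G ψ` makes ψ true under `V ∩ W ⊆ V'` for every reachable forwarding state `(V', M')`.
-/

variable {P A : Type} {owner : A → P}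

theorem sat_mono_of_propPos {H H' : Set (Set P)} {V V' : Set A} {M M' : Set (Msg P A)}
    (hV : V ⊆ V') :
    ∀ {φ : Form P A}, PropPos φ → sat owner H φ V M → sat owner H' φ V' M'
  | .atom _, _, h => hV h
  | .and _ _, hφ, h =>
    ⟨sat_mono_of_propPos hV hφ.1 h.1, sat_mono_of_propPos hV hφ.2 h.2⟩
  | .or _ _, hφ, h =>
    h.imp (sat_mono_of_propPos hV hφ.1) (sat_mono_of_propPos hV hφ.2)

theorem Explains.fact_mem {V : Set A} {M : Set (Msg P A)} {m : Msg P A}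
    (h : Explains owner V M m) : m.fact ∈ V := by
  obtain ⟨L, -, -, -, hfact, ⟨m₀, hhead, -, hm₀V⟩, -⟩ := h
  rwa [← hfact m₀ (List.mem_of_mem_head? hhead)]

theorem FwState.hComp_completeH {V : Set A} {M : Set (Msg P A)} (h : FwState owner V M) :
    HComp (completeH P) M :=
  fun m hm => ⟨m.sender, (h m hm).1⟩

theorem FwState.restrict {V : Set A} {M : Set (Msg P A)} (h : FwState owner V M) (K : Set A) :
    FwState owner (V ∩ K) {m ∈ M | m.fact ∈ K} := by
  rintro m ⟨hmM, hmK⟩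
  obtain ⟨hsender, L, hLM, hchain, hnodup, hfact, ⟨m₀, hhead, hown, hm₀V⟩, hlast⟩ :=
    h m hmM
  have hLK : ∀ x ∈ L, x.fact ∈ K := fun x hx => hfact x hx ▸ hmK
  exact ⟨hsender, L, fun x hx => ⟨hLM x hx, hLK x hx⟩, hchain, hnodup, hfact,
    ⟨m₀, hhead, hown, hm₀V, hLK m₀ (List.mem_of_mem_head? hhead)⟩, hlast⟩

section Indistinguishability

variable {s t : Set A × Set (Msg P A)}

theorem indist_refl (i : P) (s : Set A × Set (Msg P A)) : indist owner i s s :=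
  ⟨rfl, rfl⟩

theorem indist.fact_mem_iff {i : P} (h : indist owner i s t) {p : A} (hp : owner p = i) :
    p ∈ s.1 ↔ p ∈ t.1 := by
  simpa [hp] using Set.ext_iff.mp h.1 p

theorem indist.msg_mem_iff {i : P} (h : indist owner i s t) {m : Msg P A} (hm : i ∈ m.grp) :
    m ∈ s.2 ↔ m ∈ t.2 := by
  simpa [hm] using Set.ext_iff.mp h.2 m

theorem reach.nonempty {G : Set P} (h : reach owner G s t) : G.Nonempty := by
  obtain ⟨-, -, i, hi, -⟩ := Relation.TransGen.tail'_iff.mp h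
  exact ⟨i, hi⟩

theorem reach.fact_mem {G : Set P} (h : reach owner G s t) {p : A} (hG : G = {owner p})
    (hp : p ∈ s.1) : p ∈ t.1 := by
  induction h with
  | single hst =>
    obtain ⟨i, hi, hst⟩ := hst
    exact (hst.fact_mem_iff (hG ▸ hi).symm).mp hp
  | tail _ hst ih =>
    obtain ⟨i, hi, hst⟩ := hst
    exact (hst.fact_mem_iff (hG ▸ hi).symm).mp ih

theorem reach.msg_mem {G : Set P} (h : reach owner G s t) {m : Msg P A} (hG : G ⊆ m.grp)
    (hm : m ∈ s.2) : m ∈ t.2 := by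
  induction h with
  | single hst =>
    obtain ⟨i, hi, hst⟩ := hst
    exact (hst.msg_mem_iff (hG hi)).mp hm
  | tail _ hst ih =>
    obtain ⟨i, hi, hst⟩ := hst
    exact (hst.msg_mem_iff (hG hi)).mp ih

end Indistinguishability

def forcedFacts (owner : A → P) (G : Set P) (V : Set A) (M : Set (Msg P A)) : Set A :=
  {p | (∃ m ∈ M, G ⊆ m.grp ∧ m.fact = p) ∨ (p ∈ V ∧ G = {owner p})}

theorem forcedFacts_subset_of_reach {G : Set P} {V V' : Set A} {M M' : Set (Msg P A)}
    (hS' : FwState owner V' M') (h : reach owner G (V, M) (V', M')) :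
    forcedFacts owner G V M ⊆ V' := by
  rintro p (⟨m, hmM, hG, rfl⟩ | ⟨hpV, hG⟩)
  · exact (hS' m (h.msg_mem hG hmM)).2.fact_mem
  · exact h.fact_mem hG hpV

def forgetOutside (owner : A → P) (K : Set A) (S : Set P) (s : Set A × Set (Msg P A)) :
    Set A × Set (Msg P A) :=
  ({q ∈ s.1 | q ∈ K ∨ ∀ g ∈ S, owner q = g}, {m ∈ s.2 | m.fact ∈ K ∨ S ⊆ m.grp})

theorem forgetOutside_empty (K : Set A) (s : Set A × Set (Msg P A)) :
    forgetOutside owner K ∅ s = s := by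
  simp [forgetOutside]

theorem indist_forgetOutside_insert (K : Set A) (g : P) (S : Set P)
    (s : Set A × Set (Msg P A)) :
    indist owner g (forgetOutside owner K S s) (forgetOutside owner K (insert g S) s) := by
  constructor <;> ext x <;> simp only [forgetOutside, Set.mem_ofPred_eq, Set.forall_mem_insert,
    Set.insert_subset_iff] <;> grind

theorem reflTransGen_forgetOutside {G S : Set P} (hS : S.Finite) (hSG : S ⊆ G) (K : Set A)
    (s : Set A × Set (Msg P A)) :
    Relation.ReflTransGen (fun s t => ∃ i ∈ G, indist owner i s t) s
      (forgetOutside owner K S s) := by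
  induction S, hS using Set.Finite.induction_on with
  | empty => rw [forgetOutside_empty]
  | @insert g S _ _ ih =>
    rw [Set.insert_subset_iff] at hSG
    exact (ih hSG.2).tail ⟨g, hSG.1, indist_forgetOutside_insert K g S s⟩

theorem reach_forgetOutside {G : Set P} (hfin : G.Finite) (hne : G.Nonempty) (K : Set A)
    (s : Set A × Set (Msg P A)) : reach owner G s (forgetOutside owner K G s) :=
  let ⟨i, hi⟩ := hne
  Relation.TransGen.tail' (reflTransGen_forgetOutside hfin subset_rfl K s)
    ⟨i, hi, indist_refl i _⟩

theorem forgetOutside_forcedFacts {G : Set P} (hne : G.Nonempty) (V : Set A)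
    (M : Set (Msg P A)) :
    forgetOutside owner (forcedFacts owner G V M) G (V, M) =
      (V ∩ forcedFacts owner G V M, {m ∈ M | m.fact ∈ forcedFacts owner G V M}) := by
  have hatom : ∀ q ∈ V, (∀ g ∈ G, owner q = g) → q ∈ forcedFacts owner G V M :=
    fun q hqV hq => .inr ⟨hqV,
      Set.eq_singleton_iff_nonempty_unique_mem.mpr ⟨hne, fun g hg => (hq g hg).symm⟩⟩
  have hmsg : ∀ m ∈ M, G ⊆ m.grp → m.fact ∈ forcedFacts owner G V M := fun m hmM hG =>
    .inl ⟨m, hmM, hG, rfl⟩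
  refine Prod.ext (Set.ext fun q => ?_) (Set.ext fun m => ?_)
  · exact ⟨fun ⟨hqV, hq⟩ => ⟨hqV, hq.elim id (hatom q hqV)⟩,
      fun ⟨hqV, hq⟩ => ⟨hqV, .inl hq⟩⟩
  · exact ⟨fun ⟨hmM, hm⟩ => ⟨hmM, hm.elim id (hmsg m hmM)⟩,
      fun ⟨hmM, hm⟩ => ⟨hmM, .inl hm⟩⟩

theorem sat_ck_completeH_iff {H : Set (Set P)} {V : Set A} {M : Set (Msg P A)}
    (hS : FwState owner V M) (hC : HComp H M) {G : Set P} (hG : G.Finite) {ψ : Form P A}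
    (hψ : PropPos ψ) :
    sat owner (completeH P) (.ck G ψ) V M ↔ sat owner H (.ck G ψ) V M := by
  refine ⟨fun h V' M' hS' _ hreach => ?_, fun h V' M' hS' _ hreach => ?_⟩
  · exact sat_mono_of_propPos subset_rfl hψ (h V' M' hS' hS'.hComp_completeH hreach)
  · set W := forcedFacts owner G V M
    have hne : G.Nonempty := hreach.nonempty
    have hreachW := reach_forgetOutside (owner := owner) hG hne W (V, M)
    rw [forgetOutside_forcedFacts hne] at hreachW
    have hW := h _ _ (hS.restrict W) (fun m hm => hC m hm.1) hreachW
    exact sat_mono_of_propPos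
      (Set.inter_subset_right.trans (forcedFacts_subset_of_reach hS' hreach)) hψ hW

theorem fw_nonnested_H_independent {P A : Type} [Fintype P] (owner : A → P)
    (H : Set (Set P)) (V : Set A) (M : Set (Msg P A))
    (hS : FwState owner V M) (hC : HComp H M)
    (φ : Form P A) (hφ : NonNested φ) :
    sat owner (completeH P) φ V M ↔ sat owner H φ V M := by
  induction φ with
  | atom _ => exact Iff.rfl
  | neg _ _ => exact hφ.elim
  | and _ _ ih₁ ih₂ => exact and_congr (ih₁ hφ.1) (ih₂ hφ.2)
  | or _ _ ih₁ ih₂ => exact or_congr (ih₁ hφ.1) (ih₂ hφ.2)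
  | ck G ψ => exact sat_ck_completeH_iff hS hC (Set.toFinite G) hφ
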